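/- arXiv:1306.2053 — 2 statements merged into one kernel-verified Lean document; each statement's English description precedes it below -/
import Mathlib

section
/- Let G = (I ∪ T, E) be a finite graph where I and T are disjoint, I is 2-independent in G (every two distinct vertices of I are at graph distance at least 3), and the induced subgraph G[T] is a forest. Then for every edge labeling l: E → {N, F} there exists a coloring c: V → {−2, −1, 0, 1, 2} that is a threshold-coloring of G with respect to l with threshold t = 1. -/
/-!
Colour the forest `G[T]` with signs `±1` so that the endpoints of an edge get the same sign
exactly when the edge is near; this is possible because, going outwards from a root of each
tree, the sign of a vertex is forced by the product of the labels along the unique path to it.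
The vertices of `I` get colour `0` and a vertex `v ∈ T` gets its sign times a magnitude in
`{1, 2}`: magnitude `2` exactly when the edge to its `I`-neighbour is far. This is well defined
because, `I` being 2-independent, `v` has at most one neighbour in `I`, and `I` has no inner
edges. Two colours in `{±1, ±2}` differ by at most `1` exactly when their signs agree.
-/

namespace SimpleGraph

variable {V : Type*} {G : SimpleGraph V}

lemma IsAcyclic.prod_edges_mul_prod_edges_of_adj (hG : G.IsAcyclic) (f : Sym2 V → ℤˣ)
    {r u v : V} {p : G.Walk r u} {q : G.Walk r v} (hp : p.IsPath) (hq : q.IsPath)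
    (huv : G.Adj u v) : (p.edges.map f).prod * (q.edges.map f).prod = f s(u, v) := by
  by_cases hu : u ∈ q.support
  · rw [hG.path_concat hp hq huv hu, Walk.edges_concat]
    simp [← mul_assoc, Int.units_mul_self]
  · have hv : v ∈ p.support := hG.mem_support_of_ne_mem_support_of_adj_of_isPath hp hq huv hu
    rw [hG.path_concat hq hp huv.symm hv, Walk.edges_concat, Sym2.eq_swap]
    simp [mul_right_comm _ (f _), Int.units_mul_self]

lemma IsAcyclic.exists_mul_eq (hG : G.IsAcyclic) (f : Sym2 V → ℤˣ) :
    ∃ s : V → ℤˣ, ∀ ⦃u v⦄, G.Adj u v → s u * s v = f s(u, v) := by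
  classical
  let root (v : V) : V := Quot.out (G.connectedComponentMk v)
  have hroot (v : V) : G.Reachable (root v) v := ConnectedComponent.exact (Quot.out_eq _)
  let path (v : V) : G.Path (root v) v := (hroot v).some.toPath
  refine ⟨fun v => ((path v).1.edges.map f).prod, fun u v huv => ?_⟩
  have hr : root u = root v := congrArg Quot.out (ConnectedComponent.sound huv.reachable)
  simpa using hG.prod_edges_mul_prod_edges_of_adj f ((Walk.isPath_copy _ hr rfl).2 (path u).2)
    (path v).2 huv

lemma IsAcyclic.exists_eq_iff (hG : G.IsAcyclic) (P : Sym2 V → Prop) :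
    ∃ s : V → ℤˣ, ∀ ⦃u v⦄, G.Adj u v → (s u = s v ↔ P s(u, v)) := by
  classical
  obtain ⟨s, hs⟩ := hG.exists_mul_eq fun e => if P e then 1 else -1
  refine ⟨s, fun u v huv => ?_⟩
  rw [← Int.units_inv_eq_self (s v), ← mul_eq_one_iff_eq_inv, hs huv]
  split_ifs <;> simpa

lemma not_adj_of_forall_three_le_length {u v : V} (h : ∀ p : G.Walk u v, 3 ≤ p.length) :
    ¬ G.Adj u v := fun huv => by simpa using h huv.toWalk

lemma not_adj_of_adj_of_forall_three_le_length {u v w : V}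
    (h : ∀ p : G.Walk u v, 3 ≤ p.length) (huw : G.Adj u w) : ¬ G.Adj w v := fun hwv => by
  simpa using h (.cons huw hwv.toWalk)

lemma exists_iff_of_forall_three_le_length {I : Set V}
    (hI : ∀ u ∈ I, ∀ v ∈ I, u ≠ v → ∀ p : G.Walk u v, 3 ≤ p.length) (P : Sym2 V → Prop) :
    ∃ Q : V → Prop, ∀ u ∈ I, ∀ v, G.Adj u v → (Q v ↔ P s(u, v)) := by
  refine ⟨fun v => ∀ u ∈ I, G.Adj u v → P s(u, v), fun u hu v huv => ⟨fun h => h u hu huv, ?_⟩⟩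
  intro hP u' hu' hu'v
  obtain rfl : u' = u := by
    by_contra hne
    exact not_adj_of_adj_of_forall_three_le_length (hI u' hu' u hu hne) hu'v huv.symm
  exact hP

end SimpleGraph

section

variable (p q : Prop) [Decidable p] [Decidable q] (σ τ : ℤˣ)

lemma units_mul_ite_mem : σ * (if p then 1 else 2 : ℤ) ∈ ({-2, -1, 0, 1, 2} : Set ℤ) := by
  rcases Int.units_eq_one_or σ with rfl | rfl <;> split_ifs <;> simp

lemma abs_units_mul_ite_le_one_iff : |σ * (if p then 1 else 2 : ℤ)| ≤ 1 ↔ p := by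
  rcases Int.units_eq_one_or σ with rfl | rfl <;> split_ifs <;> simpa

lemma abs_units_mul_ite_sub_units_mul_ite_le_one_iff :
    |σ * (if p then 1 else 2 : ℤ) - τ * (if q then 1 else 2 : ℤ)| ≤ 1 ↔ σ = τ := by
  rcases Int.units_eq_one_or σ with rfl | rfl <;> rcases Int.units_eq_one_or τ with rfl | rfl <;>
    split_ifs <;> decide

end

theorem stmt1_general {V : Type*} (G : SimpleGraph V) (I T : Set V)
    (hcover : I ∪ T = Set.univ)
    (hI : ∀ u ∈ I, ∀ v ∈ I, u ≠ v → ∀ p : G.Walk u v, 3 ≤ p.length)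
    (hT : (G.induce T).IsAcyclic)
    (l : Sym2 V → Bool) :
    ∃ c : V → ℤ, (∀ v, c v ∈ ({-2, -1, 0, 1, 2} : Set ℤ)) ∧
      ∀ u v : V, G.Adj u v → (|c u - c v| ≤ 1 ↔ l s(u, v) = true) := by
  classical
  obtain ⟨σ, hσ⟩ := hT.exists_eq_iff fun e => l (e.map (↑)) = true
  obtain ⟨Q, hQ⟩ := G.exists_iff_of_forall_three_le_length hI fun e => l e = true
  have hIT (v : V) (hv : v ∉ T) : v ∈ I := by simpa [hv] using hcover.ge (Set.mem_univ v)
  refine ⟨fun v => if hv : v ∈ T then σ ⟨v, hv⟩ * (if Q v then 1 else 2) else 0, fun v => ?_,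
    fun u v huv => ?_⟩
  · by_cases hv : v ∈ T
    · simpa only [dif_pos hv] using units_mul_ite_mem (Q v) (σ ⟨v, hv⟩)
    · simp [hv]
  dsimp only
  by_cases hu : u ∈ T <;> by_cases hv : v ∈ T
  · rw [dif_pos hu, dif_pos hv, abs_units_mul_ite_sub_units_mul_ite_le_one_iff]
    exact hσ (u := ⟨u, hu⟩) (v := ⟨v, hv⟩) huv
  · rw [dif_pos hu, dif_neg hv, sub_zero, abs_units_mul_ite_le_one_iff, Sym2.eq_swap]
    exact hQ v (hIT v hv) u huv.symm
  · rw [dif_neg hu, dif_pos hv, zero_sub, abs_neg, abs_units_mul_ite_le_one_iff]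
    exact hQ u (hIT u hu) v huv
  · exact absurd huv (SimpleGraph.not_adj_of_forall_three_le_length
      (hI u (hIT u hu) v (hIT v hv) huv.ne))

/-- If the vertex set of a finite graph `G` partitions into a 2-independent set `I`
and a set `T` inducing a forest, `G` is (5,1)-total-threshold-colorable. -/
theorem stmt1 {V : Type*} [Fintype V] (G : SimpleGraph V) (I T : Set V)
    (hdisj : Disjoint I T) (hcover : I ∪ T = Set.univ)
    (hI : ∀ u ∈ I, ∀ v ∈ I, u ≠ v → ∀ p : G.Walk u v, 3 ≤ p.length)
    (hT : (G.induce T).IsAcyclic)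
    (l : Sym2 V → Bool) :
    ∃ c : V → ℤ, (∀ v, c v ∈ ({-2, -1, 0, 1, 2} : Set ℤ)) ∧
      ∀ u v : V, G.Adj u v → (|c u - c v| ≤ 1 ↔ l s(u, v) = true) :=
  stmt1_general G I T hcover hI hT l
end

section
/- Every finite directed graph obtained by orienting the edges of a finite grid graph such that every directed cycle would have to contain a vertex that is a source or a sink is acyclic. Precisely: if D is an orientation of a finite planar grid where for every 4-cycle the bottom-right vertex is a source or a sink (both incident oriented edges outgoing or both incoming), then D contains no directed cycle. -/
/-!
Order the grid points lexicographically. On a directed cycle, take a vertex `u` of the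
strongly connected component that is lexicographically largest: its predecessor and its
successor on the cycle both lie to the left of or above `u`. If they coincide, an edge
would be oriented both ways. Otherwise they are the two other corners of the unit square
whose bottom-right vertex is `u`, and `u` is neither a source nor a sink of that square.
-/

open Relation

theorem Relation.TransGen.exists_local_max {α β : Type*} [LinearOrder β] {r : α → α → Prop}
    {v : α} (f : α → β) (hfin : {u | ∃ x, r x u}.Finite) (hv : TransGen r v v) :
    ∃ a u b, r a u ∧ r u b ∧ f a ≤ f u ∧ f b ≤ f u := by
  set S := {u | ReflTransGen r v u ∧ ReflTransGen r u v}
  have hcyc : ∀ u ∈ S, TransGen r u u := fun u hu => .trans_right hu.2 (hv.trans_left hu.1)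
  have hSfin : S.Finite := hfin.subset fun u hu =>
    let ⟨x, _, hxu⟩ := TransGen.tail'_iff.mp (hcyc u hu)
    ⟨x, hxu⟩
  obtain ⟨u, hu, hmax⟩ := S.exists_max_image f hSfin ⟨v, .refl, .refl⟩
  obtain ⟨b, hub, hbu⟩ := TransGen.head'_iff.mp (hcyc u hu)
  obtain ⟨a, hua, hau⟩ := TransGen.tail'_iff.mp (hcyc u hu)
  exact ⟨a, u, b, hau, hub, hmax a ⟨hu.1.trans hua, .head hau hu.2⟩,
    hmax b ⟨hu.1.tail hub, hbu.trans hu.2⟩⟩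

def GridAdj (u v : ℕ × ℕ) : Prop :=
  (u.1 = v.1 ∧ (u.2 + 1 = v.2 ∨ v.2 + 1 = u.2)) ∨ (u.2 = v.2 ∧ (u.1 + 1 = v.1 ∨ v.1 + 1 = u.1))

theorem GridAdj.symm {u v : ℕ × ℕ} (h : GridAdj u v) : GridAdj v u := by
  unfold GridAdj at *; omega

/-- `w` is the left or the upper neighbour of `u`. -/
def IsLowerNeighbor (w u : ℕ × ℕ) : Prop :=
  (w.1 = u.1 ∧ w.2 + 1 = u.2) ∨ (w.2 = u.2 ∧ w.1 + 1 = u.1)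

theorem GridAdj.isLowerNeighbor_of_toLex_le {w u : ℕ × ℕ} (hadj : GridAdj w u)
    (hle : toLex w ≤ toLex u) : IsLowerNeighbor w u := by
  rw [Prod.Lex.toLex_le_toLex] at hle
  unfold GridAdj at hadj
  unfold IsLowerNeighbor
  omega

theorem IsLowerNeighbor.exists_square_of_ne {a b u : ℕ × ℕ} (ha : IsLowerNeighbor a u)
    (hb : IsLowerNeighbor b u) (hab : a ≠ b) :
    ∃ i j, u = (i + 1, j + 1) ∧
      (a = (i, j + 1) ∧ b = (i + 1, j) ∨ a = (i + 1, j) ∧ b = (i, j + 1)) := by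
  obtain ⟨a1, a2⟩ := a
  obtain ⟨b1, b2⟩ := b
  obtain ⟨i, j⟩ := u
  unfold IsLowerNeighbor at ha hb
  simp only [ne_eq, Prod.mk.injEq] at ha hb hab ⊢
  exact ⟨i - 1, j - 1, by omega⟩

theorem false_of_path_through_corner {D : ℕ × ℕ → ℕ × ℕ → Prop}
    (hanti : ∀ u w, D u w → ¬D w u) {a b : ℕ × ℕ} {i j : ℕ}
    (hsq : (D (i + 1, j + 1) (i, j + 1) ∧ D (i + 1, j + 1) (i + 1, j)) ∨
      (D (i, j + 1) (i + 1, j + 1) ∧ D (i + 1, j) (i + 1, j + 1)))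
    (hab : a = (i, j + 1) ∧ b = (i + 1, j) ∨ a = (i + 1, j) ∧ b = (i, j + 1))
    (hau : D a (i + 1, j + 1)) (hub : D (i + 1, j + 1) b) : False := by
  rcases hab with ⟨rfl, rfl⟩ | ⟨rfl, rfl⟩ <;> rcases hsq with ⟨h1, h2⟩ | ⟨h1, h2⟩
  exacts [hanti _ _ hau h1, hanti _ _ hub h2, hanti _ _ hau h2, hanti _ _ hub h1]

/-- An orientation `D` of the m × n grid graph (edges only between grid points at
distance 1, with exactly one direction per edge) in which the bottom-right vertex of
every unit square is a source or a sink of that square contains no directed cycle. -/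
theorem stmt17 (m n : ℕ) (D : ℕ × ℕ → ℕ × ℕ → Prop)
    (hgrid : ∀ u v : ℕ × ℕ, D u v →
      u.1 < m ∧ u.2 < n ∧ v.1 < m ∧ v.2 < n ∧
      ((u.1 = v.1 ∧ (u.2 + 1 = v.2 ∨ v.2 + 1 = u.2)) ∨
       (u.2 = v.2 ∧ (u.1 + 1 = v.1 ∨ v.1 + 1 = u.1))))
    (horient : ∀ u v : ℕ × ℕ, u.1 < m → u.2 < n → v.1 < m → v.2 < n →
      ((u.1 = v.1 ∧ (u.2 + 1 = v.2 ∨ v.2 + 1 = u.2)) ∨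
       (u.2 = v.2 ∧ (u.1 + 1 = v.1 ∨ v.1 + 1 = u.1))) →
      (D u v ↔ ¬D v u))
    (hsq : ∀ i j : ℕ, i + 1 < m → j + 1 < n →
      (D (i + 1, j + 1) (i, j + 1) ∧ D (i + 1, j + 1) (i + 1, j)) ∨
      (D (i, j + 1) (i + 1, j + 1) ∧ D (i + 1, j) (i + 1, j + 1))) :
    ∀ v : ℕ × ℕ, ¬Relation.TransGen D v v := by
  intro v hv
  have hanti : ∀ u w, D u w → ¬D w u := fun u w h =>
    let ⟨h1, h2, h3, h4, h5⟩ := hgrid u w h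
    (horient u w h1 h2 h3 h4 h5).mp h
  have hfin : {u | ∃ x, D x u}.Finite :=
    ((Set.finite_Iio m).prod (Set.finite_Iio n)).subset fun u ⟨x, hxu⟩ =>
      let ⟨_, _, h1, h2, _⟩ := hgrid x u hxu
      ⟨h1, h2⟩
  obtain ⟨a, u, b, hau, hub, hau_le, hbu_le⟩ := hv.exists_local_max toLex hfin
  have ha := GridAdj.isLowerNeighbor_of_toLex_le (hgrid a u hau).2.2.2.2 hau_le
  have hb := GridAdj.isLowerNeighbor_of_toLex_le (GridAdj.symm (hgrid u b hub).2.2.2.2) hbu_le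
  by_cases hab : a = b
  · exact hanti a u hau (hab ▸ hub)
  obtain ⟨i, j, rfl, hab⟩ := ha.exists_square_of_ne hb hab
  obtain ⟨_, _, hum, hun, _⟩ := hgrid a _ hau
  exact false_of_path_through_corner hanti (hsq i j hum hun) hab hau hub
end
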